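/- arXiv:2603.21144 — 4 statements merged into one kernel-verified Lean document; each statement's English description precedes it below -/
import Mathlib

section
/- Let λ : ℕ → ℝ be a nonnegative summable sequence and let a : ℕ → ℝ satisfy ∑_k a_k² < ∞. Let μ̃ = ⨂_{k∈ℕ} N(a_k, λ_k) be the infinite product on ℕ → ℝ of the one-dimensional Gaussian measures with mean a_k and variance λ_k. Then μ̃({x : ℕ → ℝ | the series ∑_k x_k² converges}) = 1, i.e., the infinite-product Gaussian measure is concentrated on the sequences belonging to ℓ². -/
/-!
Each coordinate `x k` has law `N(a k, λ k)` under `μ`, so `∫ x k ^ 2 dμ = a k ^ 2 + λ k`. By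
monotone convergence `∫ ∑ k, x k ^ 2 dμ = ∑ k, (a k ^ 2 + λ k) < ∞`, hence `∑ k, x k ^ 2` is
finite `μ`-almost everywhere.
-/

open MeasureTheory ProbabilityTheory
open scoped ENNReal NNReal

lemma integral_sq_gaussianReal (m : ℝ) (v : ℝ≥0) :
    ∫ y, y ^ 2 ∂gaussianReal m v = m ^ 2 + v := by
  have h := variance_eq_sub (memLp_id_gaussianReal (μ := m) (v := v) 2)
  simp only [Pi.pow_apply, id_eq] at h
  rw [variance_id_gaussianReal, integral_id_gaussianReal] at h
  linarith

lemma lintegral_ofReal_sq_gaussianReal (m : ℝ) (v : ℝ≥0) :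
    ∫⁻ y, ENNReal.ofReal (y ^ 2) ∂gaussianReal m v = ENNReal.ofReal (m ^ 2 + v) := by
  rw [← integral_sq_gaussianReal, ofReal_integral_eq_lintegral_ofReal]
  · exact (memLp_id_gaussianReal 2).integrable_sq
  · exact Filter.Eventually.of_forall fun y => sq_nonneg y

lemma MeasureTheory.IsProjectiveLimit.map_eval_of_pi {ι : Type*} {X : ι → Type*}
    [∀ i, MeasurableSpace (X i)] {μ : Measure (∀ i, X i)} {ν : ∀ i, Measure (X i)}
    [∀ i, IsProbabilityMeasure (ν i)]
    (hμ : IsProjectiveLimit μ fun I : Finset ι => Measure.pi fun i : I => ν i) (i : ι) :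
    μ.map (Function.eval i) = ν i := by
  have hi : i ∈ ({i} : Finset ι) := Finset.mem_singleton_self i
  have heval : (Function.eval i : (∀ j, X j) → X i) =
      Function.eval (⟨i, hi⟩ : ({i} : Finset ι)) ∘ Finset.restrict {i} := rfl
  rw [heval, ← Measure.map_map (measurable_pi_apply _) (Finset.measurable_restrict _), hμ {i}]
  exact (measurePreserving_eval (fun j : ({i} : Finset ι) => ν j) ⟨i, hi⟩).map_eq

lemma ae_summable_of_tsum_lintegral_ofReal_ne_top {α ι : Type*} [MeasurableSpace α] [Countable ι]
    {μ : Measure α} {f : ι → α → ℝ} (hf : ∀ k, AEMeasurable (f k) μ) (hf_nonneg : ∀ k x, 0 ≤ f k x)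
    (h : ∑' k, ∫⁻ x, ENNReal.ofReal (f k x) ∂μ ≠ ∞) :
    ∀ᵐ x ∂μ, Summable fun k => f k x := by
  have hmeas : ∀ k, AEMeasurable (fun x => ENNReal.ofReal (f k x)) μ :=
    fun k => ENNReal.measurable_ofReal.comp_aemeasurable (hf k)
  rw [← lintegral_tsum hmeas] at h
  filter_upwards [ae_lt_top' (AEMeasurable.tsum hmeas) h] with x hx
  exact (ENNReal.summable_toReal hx.ne).congr fun k => ENNReal.toReal_ofReal (hf_nonneg k x)

/-- The infinite product `μ̃ = ⨂_{k∈ℕ} N(a k, λ k)` of one-dimensional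
Gaussian measures (a probability measure on `ℕ → ℝ` whose finite-dimensional marginals are
the corresponding finite products) is concentrated on the square-summable sequences,
provided `λ` is nonnegative summable and `∑ k, (a k)^2 < ∞`. -/
theorem infinite_product_gaussian_concentrated_on_l2
    (lam a : ℕ → ℝ) (hlam_nonneg : ∀ k, 0 ≤ lam k) (hlam_summable : Summable lam)
    (ha : Summable fun k => a k ^ 2)
    (μ : Measure (ℕ → ℝ)) [IsProbabilityMeasure μ]
    (hμ : IsProjectiveLimit μ
      (fun I : Finset ℕ =>
        Measure.pi fun i : I => gaussianReal (a i) (Real.toNNReal (lam i)))) :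
    μ {x : ℕ → ℝ | Summable fun k => x k ^ 2} = 1 := by
  have hmoment : ∀ k, ∫⁻ x, ENNReal.ofReal (x k ^ 2) ∂μ = ENNReal.ofReal (a k ^ 2 + lam k) := by
    intro k
    rw [← lintegral_map (f := fun y : ℝ => ENNReal.ofReal (y ^ 2)) (by fun_prop)
      (measurable_pi_apply k),
      hμ.map_eval_of_pi (ν := fun k => gaussianReal (a k) (Real.toNNReal (lam k))),
      lintegral_ofReal_sq_gaussianReal, Real.coe_toNNReal _ (hlam_nonneg k)]
  have hsum : ∑' k, ∫⁻ x, ENNReal.ofReal (x k ^ 2) ∂μ ≠ ∞ := by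
    rw [tsum_congr hmoment, ← ENNReal.ofReal_tsum_of_nonneg
      (fun k => add_nonneg (sq_nonneg _) (hlam_nonneg k)) (ha.add hlam_summable)]
    exact ENNReal.ofReal_ne_top
  have hae := ae_summable_of_tsum_lintegral_ofReal_ne_top
    (fun k => (measurable_pi_apply k).pow_const 2 |>.aemeasurable) (fun k x => sq_nonneg (x k)) hsum
  exact (measure_congr (ae_eq_univ.2 hae)).trans measure_univ
end

section
/- Under the setting and covariance hypothesis of the preceding coefficient lemma (centered square-integrable Z_t : Ω → H with E[⟨Z_t, u⟩⟨Z_s, v⟩] = ∑_n B_n(|t−s|) ∑_{j=1}^{Γ(n)} ⟨u, e_{n,j}⟩⟨v, e_{n,j}⟩), assume additionally the trace condition ∑_n Γ(n) B_n(0) < ∞. Then for every t ∈ [0,T] and every N ∈ ℕ, E[ ‖ Z_t − ∑_{n≤N} ∑_{j=1}^{Γ(n)} ⟨Z_t, e_{n,j}⟩ e_{n,j} ‖² ] = ∑_{n>N} Γ(n) B_n(0); in particular, the truncated expansions converge to Z_t in L²(Ω; H) as N → ∞, uniformly in t ∈ [0,T]. -/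
open MeasureTheory
open scoped RealInnerProductSpace

/-! By Parseval's identity, the squared truncation error `‖Z t - S_N (Z t)‖²` is the sum of the
squared coefficients `⟪Z t, e (n, j)⟫²` over `n > N`. The covariance identity at `s = t`,
`u = v = e (n, j)` gives each of them expectation `B n 0`, and expectation and summation commute
because the resulting series is dominated by the trace series `∑ Γ n * B n 0`. The error is thus
a tail of that series, which does not depend on `t`: this is the uniformity in `t`. -/

section

variable {ι : Type*} {κ : ι → Type*} [∀ i, Fintype (κ i)]
  {E : Type*} [NormedAddCommGroup E] [InnerProductSpace ℝ E]

theorem Orthonormal.sum_inner_mul_inner_sigma [DecidableEq ι] {v : (Σ i, κ i) → E}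
    (hv : Orthonormal ℝ v) (p : Σ i, κ i) (i : ι) :
    ∑ j, ⟪v p, v ⟨i, j⟩⟫ * ⟪v p, v ⟨i, j⟩⟫ = if i = p.1 then 1 else 0 := by
  classical
  obtain ⟨i', k⟩ := p
  by_cases hi : i = i'
  · subst hi
    simp [orthonormal_iff_ite.mp hv]
  · simp [orthonormal_iff_ite.mp hv, hi, Ne.symm hi]

theorem HilbertBasis.norm_sq_eq_tsum_sum_inner_sq (b : HilbertBasis (Σ i, κ i) ℝ E) (x : E) :
    ‖x‖ ^ 2 = ∑' i, ∑ j, ⟪x, b ⟨i, j⟩⟫ ^ 2 := by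
  have hparseval : HasSum (fun p ↦ ⟪x, b p⟫ ^ 2) (‖x‖ ^ 2) := by
    simpa only [real_inner_comm x, ← sq, real_inner_self_eq_norm_sq]
      using b.hasSum_inner_mul_inner x x
  exact (hparseval.sigma fun i ↦ hasSum_fintype _).tsum_eq.symm

theorem HilbertBasis.inner_sub_sum_sigma [DecidableEq ι] (b : HilbertBasis (Σ i, κ i) ℝ E)
    (x : E) (s : Finset ι) (p : Σ i, κ i) :
    ⟪x - ∑ i ∈ s, ∑ j, ⟪x, b ⟨i, j⟩⟫ • b ⟨i, j⟩, b p⟫ = if p.1 ∈ s then 0 else ⟪x, b p⟫ := by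
  classical
  rw [← Finset.sum_sigma s (fun _ ↦ Finset.univ) (fun q ↦ ⟪x, b q⟫ • b q), inner_sub_left]
  split_ifs with hp <;> simp [sum_inner, inner_smul_left, orthonormal_iff_ite.mp b.orthonormal, hp]

theorem HilbertBasis.norm_sub_sum_sigma_sq [DecidableEq ι] (b : HilbertBasis (Σ i, κ i) ℝ E)
    (x : E) (s : Finset ι) :
    ‖x - ∑ i ∈ s, ∑ j, ⟪x, b ⟨i, j⟩⟫ • b ⟨i, j⟩‖ ^ 2 =
      ∑' i, if i ∈ s then 0 else ∑ j, ⟪x, b ⟨i, j⟩⟫ ^ 2 := by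
  rw [b.norm_sq_eq_tsum_sum_inner_sq]
  refine tsum_congr fun i ↦ ?_
  split_ifs with hi <;> simp [b.inner_sub_sum_sigma, hi]

variable {Ω : Type*} [MeasurableSpace Ω] {P : Measure Ω}

theorem integral_inner_sq_of_covariance [DecidableEq ι] {v : (Σ i, κ i) → E}
    (hv : Orthonormal ℝ v) {X : Ω → E} {c : ι → ℝ}
    (hcov : ∀ u w : E, ∫ ω, ⟪X ω, u⟫ * ⟪X ω, w⟫ ∂P =
      ∑' i, c i * ∑ j, ⟪u, v ⟨i, j⟩⟫ * ⟪w, v ⟨i, j⟩⟫) (p : Σ i, κ i) :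
    ∫ ω, ⟪X ω, v p⟫ ^ 2 ∂P = c p.1 := by
  simp_rw [sq, hcov, hv.sum_inner_mul_inner_sigma, mul_ite, mul_one, mul_zero, tsum_ite_eq]

theorem integral_norm_sub_sum_sigma_sq [Countable ι] [DecidableEq ι]
    (b : HilbertBasis (Σ i, κ i) ℝ E) {X : Ω → E} (hX : MemLp X 2 P) {c : ι → ℝ}
    (hmoment : ∀ p, ∫ ω, ⟪X ω, b p⟫ ^ 2 ∂P = c p.1)
    (hsum : Summable fun i ↦ (Fintype.card (κ i) : ℝ) * c i) (s : Finset ι) :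
    ∫ ω, ‖X ω - ∑ i ∈ s, ∑ j, ⟪X ω, b ⟨i, j⟩⟫ • b ⟨i, j⟩‖ ^ 2 ∂P =
      ∑' i, if i ∈ s then 0 else (Fintype.card (κ i) : ℝ) * c i := by
  set g : ι → Ω → ℝ := fun i ω ↦ if i ∈ s then 0 else ∑ j, ⟪X ω, b ⟨i, j⟩⟫ ^ 2
  have hg_nonneg : ∀ i ω, 0 ≤ g i ω := fun i ω ↦ by
    simp only [g]; split_ifs <;> positivity
  have hcoeff_int : ∀ p, Integrable (fun ω ↦ ⟪X ω, b p⟫ ^ 2) P := fun p ↦ by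
    simpa only [real_inner_comm] using (hX.const_inner (b p)).integrable_sq
  have hg_int : ∀ i, Integrable (g i) P := fun i ↦ by
    simp only [g]
    split_ifs
    · exact integrable_zero _ _ _
    · exact integrable_finsetSum _ fun j _ ↦ hcoeff_int _
  have hg_integral : ∀ i, ∫ ω, g i ω ∂P = if i ∈ s then 0 else (Fintype.card (κ i) : ℝ) * c i :=
    fun i ↦ by
      simp only [g]
      split_ifs
      · simp
      · simp [integral_finsetSum _ fun j _ ↦ hcoeff_int _, hmoment]
  have hg_summable : Summable fun i ↦ ∫ ω, ‖g i ω‖ ∂P := by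
    simp_rw [fun i ω ↦ Real.norm_of_nonneg (hg_nonneg i ω), hg_integral]
    exact (hsum.indicator (↑s)ᶜ).congr fun i ↦ by by_cases hi : i ∈ s <;> simp [hi]
  calc ∫ ω, ‖X ω - ∑ i ∈ s, ∑ j, ⟪X ω, b ⟨i, j⟩⟫ • b ⟨i, j⟩‖ ^ 2 ∂P
      = ∫ ω, ∑' i, g i ω ∂P := by simp only [b.norm_sub_sum_sigma_sq, g]
    _ = ∑' i, ∫ ω, g i ω ∂P := (integral_tsum_of_summable_integral_norm hg_int hg_summable).symm
    _ = _ := by simp only [hg_integral]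

end

open Filter Topology in
theorem tendsto_tsum_ite_lt_atTop_zero {G : Type*} [AddCommGroup G] [TopologicalSpace G]
    [IsTopologicalAddGroup G] (f : ℕ → G) :
    Tendsto (fun N ↦ ∑' n, if N < n then f n else 0) atTop (𝓝 0) := by
  refine ((tendsto_tsum_compl_atTop_zero f).comp
    (tendsto_finset_range.comp (tendsto_add_atTop_nat 1))).congr fun N ↦ ?_
  refine (tsum_subtype {n | n ∉ Finset.range (N + 1)} f).trans (tsum_congr fun n ↦ ?_)
  simp [Set.indicator_apply]

theorem karhunen_loeve_truncation_error_general
    (Ω : Type*) [MeasurableSpace Ω] (P : Measure Ω)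
    (H : Type*) [NormedAddCommGroup H] [InnerProductSpace ℝ H]
    (Γ : ℕ → ℕ) (e : HilbertBasis (Σ n : ℕ, Fin (Γ n)) ℝ H)
    (T : ℝ) (B : ℕ → ℝ → ℝ)
    (Z : ℝ → Ω → H)
    (hZL2 : ∀ t ∈ Set.Icc (0 : ℝ) T, MemLp (Z t) 2 P)
    (hcov : ∀ t ∈ Set.Icc (0 : ℝ) T, ∀ s ∈ Set.Icc (0 : ℝ) T, ∀ u v : H,
      ∫ ω, ⟪Z t ω, u⟫ * ⟪Z s ω, v⟫ ∂P =
        ∑' n : ℕ, B n |t - s| * ∑ j : Fin (Γ n), ⟪u, e ⟨n, j⟩⟫ * ⟪v, e ⟨n, j⟩⟫)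
    (htrace : Summable fun n : ℕ => (Γ n : ℝ) * B n 0) :
    (∀ t ∈ Set.Icc (0 : ℝ) T, ∀ N : ℕ,
      ∫ ω, ‖Z t ω - ∑ n ∈ Finset.range (N + 1),
          ∑ j : Fin (Γ n), ⟪Z t ω, e ⟨n, j⟩⟫ • e ⟨n, j⟩‖ ^ 2 ∂P =
        ∑' n : ℕ, if N < n then (Γ n : ℝ) * B n 0 else 0) ∧
    (∀ ε > (0 : ℝ), ∃ N₀ : ℕ, ∀ N ≥ N₀, ∀ t ∈ Set.Icc (0 : ℝ) T,
      ∫ ω, ‖Z t ω - ∑ n ∈ Finset.range (N + 1),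
          ∑ j : Fin (Γ n), ⟪Z t ω, e ⟨n, j⟩⟫ • e ⟨n, j⟩‖ ^ 2 ∂P < ε) := by
  have htruncation : ∀ t ∈ Set.Icc (0 : ℝ) T, ∀ N : ℕ,
      ∫ ω, ‖Z t ω - ∑ n ∈ Finset.range (N + 1),
          ∑ j : Fin (Γ n), ⟪Z t ω, e ⟨n, j⟩⟫ • e ⟨n, j⟩‖ ^ 2 ∂P =
        ∑' n : ℕ, if N < n then (Γ n : ℝ) * B n 0 else 0 := by
    intro t ht N
    have hmoment := integral_inner_sq_of_covariance (c := fun n ↦ B n 0) e.orthonormal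
      fun u v ↦ by simpa using hcov t ht t ht u v
    rw [integral_norm_sub_sum_sigma_sq e (hZL2 t ht) hmoment (by simpa using htrace)]
    refine tsum_congr fun n ↦ ?_
    by_cases hn : N < n
    · simp [hn, not_le.2 hn]
    · simp [hn, not_lt.1 hn]
  refine ⟨htruncation, fun ε hε ↦ ?_⟩
  obtain ⟨N₀, hN₀⟩ := Filter.eventually_atTop.1
    ((tendsto_tsum_ite_lt_atTop_zero _).eventually (gt_mem_nhds hε))
  exact ⟨N₀, fun N hN t ht ↦ (htruncation t ht N).trans_lt (hN₀ N hN)⟩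

/-- Mean-square convergence of the Karhunen–Loève expansion: under the
diagonal covariance hypothesis and the trace condition `∑ n, Γ n * B n 0 < ∞`, the
truncation error satisfies
`E[‖Z t − ∑_{n≤N} ∑_j ⟪Z t, e (n,j)⟫ e (n,j)‖²] = ∑_{n>N} Γ n * B n 0`,
so the truncated expansions converge to `Z t` in `L²(Ω; H)`, uniformly in `t ∈ [0,T]`. -/
theorem karhunen_loeve_truncation_error
    (Ω : Type*) [MeasurableSpace Ω] (P : Measure Ω) [IsProbabilityMeasure P]
    (H : Type*) [NormedAddCommGroup H] [InnerProductSpace ℝ H] [CompleteSpace H]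
    (Γ : ℕ → ℕ) (e : HilbertBasis (Σ n : ℕ, Fin (Γ n)) ℝ H)
    (T : ℝ) (hT : 0 < T) (B : ℕ → ℝ → ℝ)
    (Z : ℝ → Ω → H)
    (hZL2 : ∀ t ∈ Set.Icc (0 : ℝ) T, MemLp (Z t) 2 P)
    (hZcentered : ∀ t ∈ Set.Icc (0 : ℝ) T, ∫ ω, Z t ω ∂P = 0)
    (hcov_summable : ∀ t ∈ Set.Icc (0 : ℝ) T, ∀ s ∈ Set.Icc (0 : ℝ) T, ∀ u v : H,
      Summable fun n : ℕ =>
        B n |t - s| * ∑ j : Fin (Γ n), ⟪u, e ⟨n, j⟩⟫ * ⟪v, e ⟨n, j⟩⟫)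
    (hcov : ∀ t ∈ Set.Icc (0 : ℝ) T, ∀ s ∈ Set.Icc (0 : ℝ) T, ∀ u v : H,
      ∫ ω, ⟪Z t ω, u⟫ * ⟪Z s ω, v⟫ ∂P =
        ∑' n : ℕ, B n |t - s| * ∑ j : Fin (Γ n), ⟪u, e ⟨n, j⟩⟫ * ⟪v, e ⟨n, j⟩⟫)
    (htrace : Summable fun n : ℕ => (Γ n : ℝ) * B n 0) :
    (∀ t ∈ Set.Icc (0 : ℝ) T, ∀ N : ℕ,
      ∫ ω, ‖Z t ω - ∑ n ∈ Finset.range (N + 1),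
          ∑ j : Fin (Γ n), ⟪Z t ω, e ⟨n, j⟩⟫ • e ⟨n, j⟩‖ ^ 2 ∂P =
        ∑' n : ℕ, if N < n then (Γ n : ℝ) * B n 0 else 0) ∧
    (∀ ε > (0 : ℝ), ∃ N₀ : ℕ, ∀ N ≥ N₀, ∀ t ∈ Set.Icc (0 : ℝ) T,
      ∫ ω, ‖Z t ω - ∑ n ∈ Finset.range (N + 1),
          ∑ j : Fin (Γ n), ⟪Z t ω, e ⟨n, j⟩⟫ • e ⟨n, j⟩‖ ^ 2 ∂P < ε) :=
  karhunen_loeve_truncation_error_general Ω P H Γ e T B Z hZL2 hcov htrace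
end

section
/- Let c > 0, 0 < γ ≤ 1, and ν > 0. Then the function φ : (0,∞) → ℝ given by φ(u) = (1 + c u^γ)^{−ν} is completely monotone on (0,∞): it is infinitely differentiable and (−1)^n φ^{(n)}(u) ≥ 0 for every n ∈ ℕ and every u > 0. -/
open Set

/-- A single term `a * u ^ β * (1 + c * u ^ γ) ^ (-μ)` encoded by a triple `(a, β, μ)`. -/
noncomputable def gcTerm (c γ : ℝ) (p : ℝ × ℝ × ℝ) (u : ℝ) : ℝ :=
  p.1 * u ^ p.2.1 * (1 + c * u ^ γ) ^ (-p.2.2)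

/-- Differentiating a term produces these two terms (up to an overall sign flip). -/
noncomputable def gcStep (c γ : ℝ) (p : ℝ × ℝ × ℝ) : List (ℝ × ℝ × ℝ) :=
  [(p.1 * (-p.2.1), p.2.1 - 1, p.2.2), (p.1 * p.2.2 * c * γ, p.2.1 + γ - 1, p.2.2 + 1)]

lemma gcTerm_hasDerivAt (c γ : ℝ) (hc : 0 < c) (p : ℝ × ℝ × ℝ) {u : ℝ} (hu : 0 < u) :
    HasDerivAt (fun u => gcTerm c γ p u)
      (-(((gcStep c γ p).map (fun q => gcTerm c γ q u)).sum)) u := by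
  obtain ⟨a, β, μ⟩ := p
  have hX : (0:ℝ) < 1 + c * u ^ γ := by positivity
  have h1 : HasDerivAt (fun u : ℝ => u ^ β) (β * u ^ (β - 1)) u :=
    Real.hasDerivAt_rpow_const (Or.inl hu.ne')
  have h2 : HasDerivAt (fun u : ℝ => 1 + c * u ^ γ) (0 + c * (γ * u ^ (γ - 1))) u :=
    (hasDerivAt_const u 1).add
      ((Real.hasDerivAt_rpow_const (p := γ) (Or.inl hu.ne')).const_mul c)
  have h3 : HasDerivAt (fun u : ℝ => (1 + c * u ^ γ) ^ (-μ))
      ((0 + c * (γ * u ^ (γ - 1))) * (-μ) * (1 + c * u ^ γ) ^ (-μ - 1)) u :=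
    h2.rpow_const (Or.inl hX.ne')
  have h4 := (h1.const_mul a).mul h3
  refine h4.congr_deriv ?_
  simp only [gcStep, gcTerm, List.map_cons, List.map_nil, List.sum_cons, List.sum_nil]
  rw [show β + γ - 1 = (β) + (γ - 1) by ring, Real.rpow_add hu,
    show -(μ + 1) = -μ - 1 by ring]
  ring

lemma gcSum_hasDerivAt (c γ : ℝ) (hc : 0 < c) (L : List (ℝ × ℝ × ℝ)) {u : ℝ} (hu : 0 < u) :
    HasDerivAt (fun u => ((L.map (fun p => gcTerm c γ p u)).sum))
      (-((((L.flatMap (gcStep c γ)).map (fun q => gcTerm c γ q u)).sum))) u := by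
  induction L with
  | nil => simpa using hasDerivAt_const u (0:ℝ)
  | cons p L ih =>
      have h := (gcTerm_hasDerivAt c γ hc p hu).add ih
      refine h.congr_deriv ?_
      simp [List.flatMap_cons, List.sum_append]
      ring

/-- The generalized Cauchy function `φ(u) = (1 + c u^γ)^{-ν}`,
for `c > 0`, `0 < γ ≤ 1`, `ν > 0`, is completely monotone on `(0,∞)`: it is infinitely
differentiable there and `(-1)^n φ⁽ⁿ⁾(u) ≥ 0` for every `n ∈ ℕ` and `u > 0`. -/
theorem generalized_cauchy_completely_monotone
    (c γ ν : ℝ) (hc : 0 < c) (hγ0 : 0 < γ) (hγ1 : γ ≤ 1) (hν : 0 < ν)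
    (φ : ℝ → ℝ) (hφ : ∀ u : ℝ, φ u = (1 + c * u ^ γ) ^ (-ν)) :
    ContDiffOn ℝ (⊤ : ℕ∞) φ (Ioi 0) ∧
      ∀ n : ℕ, ∀ u : ℝ, 0 < u →
        0 ≤ (-1 : ℝ) ^ n * iteratedDerivWithin n φ (Ioi 0) u := by
  have hφ' : φ = fun u : ℝ => (1 + c * u ^ γ) ^ (-ν) := funext hφ
  subst hφ'
  constructor
  · intro u hu
    have hu' : (0:ℝ) < u := hu
    have hX : (0:ℝ) < 1 + c * u ^ γ := by positivity
    have inner : ContDiffAt ℝ (⊤ : ℕ∞) (fun u : ℝ => 1 + c * u ^ γ) u :=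
      contDiffAt_const.add (contDiffAt_const.mul (Real.contDiffAt_rpow_const_of_ne hu'.ne'))
    have outer : ContDiffAt ℝ (⊤ : ℕ∞) (fun x : ℝ => x ^ (-ν)) (1 + c * u ^ γ) :=
      Real.contDiffAt_rpow_const_of_ne hX.ne'
    exact (outer.comp u inner).contDiffWithinAt
  · have key : ∀ n : ℕ, ∃ L : List (ℝ × ℝ × ℝ),
        (∀ p ∈ L, 0 ≤ p.1 ∧ p.2.1 ≤ 0 ∧ 0 ≤ p.2.2) ∧
        ∀ u ∈ Ioi (0:ℝ),
          iteratedDerivWithin n (fun u : ℝ => (1 + c * u ^ γ) ^ (-ν)) (Ioi 0) u =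
            (-1 : ℝ) ^ n * ((L.map (fun p => gcTerm c γ p u)).sum) := by
      intro n
      induction n with
      | zero =>
          refine ⟨[(1, 0, ν)], ?_, ?_⟩
          · rintro p hp
            simp only [List.mem_singleton] at hp
            subst hp
            exact ⟨zero_le_one, le_refl 0, hν.le⟩
          · intro u hu
            simp [iteratedDerivWithin_zero, gcTerm]
      | succ n ih =>
          obtain ⟨L, hLcond, hLrep⟩ := ih
          refine ⟨L.flatMap (gcStep c γ), ?_, ?_⟩
          · intro q hq
            rw [List.mem_flatMap] at hq
            obtain ⟨p, hpL, hq⟩ := hq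
            obtain ⟨ha, hβ, hμ⟩ := hLcond p hpL
            simp only [gcStep, List.mem_cons, List.mem_singleton, List.not_mem_nil,
              or_false] at hq
            rcases hq with h | h <;> subst h
            · exact ⟨mul_nonneg ha (by linarith),
                show p.2.1 - 1 ≤ 0 by linarith, show (0:ℝ) ≤ p.2.2 from hμ⟩
            · exact ⟨by positivity, show p.2.1 + γ - 1 ≤ 0 by linarith,
                show (0:ℝ) ≤ p.2.2 + 1 by linarith⟩
          · intro u hu
            have hu' : (0:ℝ) < u := hu
            rw [iteratedDerivWithin_succ,
              derivWithin_of_isOpen isOpen_Ioi hu]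
            have heq : iteratedDerivWithin n (fun u : ℝ => (1 + c * u ^ γ) ^ (-ν)) (Ioi 0)
                =ᶠ[nhds u] fun u => (-1 : ℝ) ^ n * ((L.map (fun p => gcTerm c γ p u)).sum) :=
              Filter.eventually_of_mem (isOpen_Ioi.mem_nhds hu) hLrep
            rw [heq.deriv_eq]
            have hd := (gcSum_hasDerivAt c γ hc L hu').const_mul ((-1 : ℝ) ^ n)
            rw [hd.deriv]
            rw [pow_succ]
            ring
    intro n u hu
    obtain ⟨L, hLcond, hLrep⟩ := key n
    rw [hLrep u hu, ← mul_assoc, ← mul_pow]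
    simp only [neg_mul, one_mul, neg_neg, one_pow, one_mul]
    apply List.sum_nonneg
    intro x hx
    rw [List.mem_map] at hx
    obtain ⟨p, hpL, rfl⟩ := hx
    obtain ⟨ha, hβ, hμ⟩ := hLcond p hpL
    have hX : (0:ℝ) < 1 + c * u ^ γ := by positivity
    exact mul_nonneg (mul_nonneg ha (Real.rpow_nonneg hu.le _)) (Real.rpow_nonneg hX.le _)
end

section
/- Let a > 0, 0 < α ≤ 1, and 0 < β ≤ 1. Then the function ψ : [0,∞) → ℝ given by ψ(u) = (1 + a u^α)^β is strictly positive with ψ(u) ≥ 1 for all u ≥ 0, and its derivative ψ'(u) = a α β u^{α−1} (1 + a u^α)^{β−1} is completely monotone on (0,∞): ψ' is infinitely differentiable on (0,∞) and (−1)^n (ψ')^{(n)}(u) ≥ 0 for every n ∈ ℕ and every u > 0. -/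
open Set

/-- Auxiliary class of functions: sums of terms `c * u^p * (1 + a u^α)^q` with
`(-1)^n c ≥ 0`, `p ≤ 0`, `q ≤ 0`. -/
inductive GneitGood (a α : ℝ) : ℕ → (ℝ → ℝ) → Prop
  | term (n : ℕ) (c p q : ℝ) (hc : 0 ≤ (-1 : ℝ) ^ n * c) (hp : p ≤ 0) (hq : q ≤ 0) :
      GneitGood a α n (fun u => c * u ^ p * (1 + a * u ^ α) ^ q)
  | add {n : ℕ} {f g : ℝ → ℝ} : GneitGood a α n f → GneitGood a α n g →
      GneitGood a α n (fun u => f u + g u)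

lemma gneit_base_pos {a α : ℝ} (ha : 0 < a) {u : ℝ} (hu : 0 ≤ u) :
    0 < 1 + a * u ^ α := by
  have : 0 ≤ a * u ^ α := mul_nonneg ha.le (Real.rpow_nonneg hu α)
  linarith

lemma GneitGood.nonneg {a α : ℝ} (ha : 0 < a) {n : ℕ} {f : ℝ → ℝ}
    (hf : GneitGood a α n f) : ∀ u : ℝ, 0 < u → 0 ≤ (-1 : ℝ) ^ n * f u := by
  induction hf with
  | term c p q hc hp hq =>
    intro u hu
    have h1 : 0 < u ^ p := Real.rpow_pos_of_pos hu p
    have h2 : (0:ℝ) < (1 + a * u ^ α) ^ q :=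
      Real.rpow_pos_of_pos (gneit_base_pos ha hu.le) q
    have : (-1 : ℝ) ^ n * (c * u ^ p * (1 + a * u ^ α) ^ q)
        = ((-1 : ℝ) ^ n * c) * (u ^ p * (1 + a * u ^ α) ^ q) := by ring
    rw [this]
    exact mul_nonneg hc (mul_nonneg h1.le h2.le)
  | add hf hg ihf ihg =>
    intro u hu
    have := ihf u hu
    have := ihg u hu
    simp only [mul_add]
    linarith

lemma gneit_term_hasDerivAt {a α : ℝ} (ha : 0 < a) (c p q : ℝ) {u : ℝ} (hu : 0 < u) :
    HasDerivAt (fun u : ℝ => c * u ^ p * (1 + a * u ^ α) ^ q)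
      ((c * p) * u ^ (p - 1) * (1 + a * u ^ α) ^ q
        + (c * q * a * α) * u ^ (p + (α - 1)) * (1 + a * u ^ α) ^ (q - 1)) u := by
  have hB : (0:ℝ) < 1 + a * u ^ α := gneit_base_pos ha hu.le
  have h1 : HasDerivAt (fun u : ℝ => u ^ p) (p * u ^ (p - 1)) u :=
    Real.hasDerivAt_rpow_const (Or.inl hu.ne')
  have h2 : HasDerivAt (fun u : ℝ => 1 + a * u ^ α) (a * (α * u ^ (α - 1))) u := by
    have := (Real.hasDerivAt_rpow_const (p := α) (Or.inl hu.ne')).const_mul a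
    exact this.const_add 1
  have h3 : HasDerivAt (fun u : ℝ => (1 + a * u ^ α) ^ q)
      ((a * (α * u ^ (α - 1))) * q * (1 + a * u ^ α) ^ (q - 1)) u :=
    h2.rpow_const (Or.inl hB.ne')
  have h4 : HasDerivAt (fun u : ℝ => c * u ^ p * (1 + a * u ^ α) ^ q) _ u := ((h1.const_mul c).mul h3)
  convert h4 using 1
  rw [Real.rpow_add hu p (α - 1)]
  ring

lemma GneitGood.deriv {a α : ℝ} (ha : 0 < a) (hα0 : 0 < α) (hα1 : α ≤ 1)
    {n : ℕ} {f : ℝ → ℝ} (hf : GneitGood a α n f) :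
    ∃ g : ℝ → ℝ, GneitGood a α (n + 1) g ∧ ∀ u : ℝ, 0 < u → HasDerivAt f (g u) u := by
  induction hf with
  | term c p q hc hp hq =>
    refine ⟨fun u => (c * p) * u ^ (p - 1) * (1 + a * u ^ α) ^ q
        + (c * q * a * α) * u ^ (p + (α - 1)) * (1 + a * u ^ α) ^ (q - 1), ?_, ?_⟩
    · refine GneitGood.add (GneitGood.term _ _ _ _ ?_ (by linarith) hq)
        (GneitGood.term _ _ _ _ ?_ (by linarith) (by linarith))
      · have : (-1 : ℝ) ^ (n + 1) * (c * p) = ((-1 : ℝ) ^ n * c) * (-p) := by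
          rw [pow_succ]; ring
        rw [this]
        exact mul_nonneg hc (by linarith)
      · have : (-1 : ℝ) ^ (n + 1) * (c * q * a * α) = ((-1 : ℝ) ^ n * c) * (-q) * (a * α) := by
          rw [pow_succ]; ring
        rw [this]
        exact mul_nonneg (mul_nonneg hc (by linarith)) (by positivity)
    · intro u hu
      exact gneit_term_hasDerivAt ha c p q hu
  | add hf hg ihf ihg =>
    obtain ⟨gf, hgf, hdf⟩ := ihf
    obtain ⟨gg, hgg, hdg⟩ := ihg
    exact ⟨fun u => gf u + gg u, GneitGood.add hgf hgg,
      fun u hu => (hdf u hu).add (hdg u hu)⟩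

lemma gneit_term_contDiffOn {a α : ℝ} (ha : 0 < a) (c p q : ℝ) :
    ContDiffOn ℝ (⊤ : ℕ∞) (fun u : ℝ => c * u ^ p * (1 + a * u ^ α) ^ q) (Ioi 0) := by
  have h1 : ContDiffOn ℝ (⊤ : ℕ∞) (fun u : ℝ => u ^ p) (Ioi 0) :=
    fun u hu => (Real.contDiffAt_rpow_const_of_ne (ne_of_gt hu)).contDiffWithinAt
  have h2 : ContDiffOn ℝ (⊤ : ℕ∞) (fun u : ℝ => 1 + a * u ^ α) (Ioi 0) := by
    refine contDiffOn_const.add (contDiffOn_const.mul ?_)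
    exact fun u hu => (Real.contDiffAt_rpow_const_of_ne (ne_of_gt hu)).contDiffWithinAt
  have h3 : ContDiffOn ℝ (⊤ : ℕ∞) (fun u : ℝ => (1 + a * u ^ α) ^ q) (Ioi 0) :=
    h2.rpow_const_of_ne fun u hu => (gneit_base_pos ha (le_of_lt hu)).ne'
  exact (contDiffOn_const.mul h1).mul h3

/-- The temporal Gneiting component `ψ(u) = (1 + a u^α)^β`, for `a > 0`,
`0 < α ≤ 1`, `0 < β ≤ 1`, satisfies `ψ(u) ≥ 1 > 0` on `[0,∞)`, has derivative
`ψ'(u) = a α β u^{α-1} (1 + a u^α)^{β-1}` on `(0,∞)`, and this derivative is completely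
monotone on `(0,∞)`. -/
theorem gneiting_temporal_component
    (a α β : ℝ) (ha : 0 < a) (hα0 : 0 < α) (hα1 : α ≤ 1) (hβ0 : 0 < β) (hβ1 : β ≤ 1)
    (ψ : ℝ → ℝ) (hψ : ∀ u : ℝ, ψ u = (1 + a * u ^ α) ^ β)
    (ψ' : ℝ → ℝ)
    (hψ' : ∀ u : ℝ, ψ' u = a * α * β * u ^ (α - 1) * (1 + a * u ^ α) ^ (β - 1)) :
    (∀ u : ℝ, 0 ≤ u → 0 < ψ u ∧ 1 ≤ ψ u) ∧
    (∀ u : ℝ, 0 < u → HasDerivAt ψ (ψ' u) u) ∧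
    ContDiffOn ℝ (⊤ : ℕ∞) ψ' (Ioi 0) ∧
    (∀ n : ℕ, ∀ u : ℝ, 0 < u →
      0 ≤ (-1 : ℝ) ^ n * iteratedDerivWithin n ψ' (Ioi 0) u) := by
  -- ψ' agrees on `Ioi 0` with a `GneitGood 0` term
  have hψ'good : GneitGood a α 0
      (fun u : ℝ => (a * α * β) * u ^ (α - 1) * (1 + a * u ^ α) ^ (β - 1)) := by
    refine GneitGood.term 0 _ _ _ ?_ (by linarith) (by linarith)
    simp only [pow_zero, one_mul]
    positivity
  have hψ'eq : ∀ u : ℝ, ψ' u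
      = (fun u : ℝ => (a * α * β) * u ^ (α - 1) * (1 + a * u ^ α) ^ (β - 1)) u := by
    intro u; rw [hψ' u]
  refine ⟨?_, ?_, ?_, ?_⟩
  · -- positivity of ψ
    intro u hu
    rw [hψ u]
    have hB : (1:ℝ) ≤ 1 + a * u ^ α := by
      have : 0 ≤ a * u ^ α := mul_nonneg ha.le (Real.rpow_nonneg hu α)
      linarith
    have h1 : (1:ℝ) ≤ (1 + a * u ^ α) ^ β := Real.one_le_rpow hB hβ0.le
    exact ⟨lt_of_lt_of_le one_pos h1, h1⟩
  · -- derivative of ψ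
    intro u hu
    have hB : (0:ℝ) < 1 + a * u ^ α := gneit_base_pos ha hu.le
    have h2 : HasDerivAt (fun u : ℝ => 1 + a * u ^ α) (a * (α * u ^ (α - 1))) u := by
      have := (Real.hasDerivAt_rpow_const (p := α) (Or.inl hu.ne')).const_mul a
      exact this.const_add 1
    have h3 : HasDerivAt (fun u : ℝ => (1 + a * u ^ α) ^ β)
        ((a * (α * u ^ (α - 1))) * β * (1 + a * u ^ α) ^ (β - 1)) u :=
      h2.rpow_const (Or.inl hB.ne')
    have h4 : HasDerivAt ψ ((a * (α * u ^ (α - 1))) * β * (1 + a * u ^ α) ^ (β - 1)) u := by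
      refine h3.congr_of_eventuallyEq ?_
      filter_upwards with v using (hψ v)
    convert h4 using 1
    rw [hψ' u]; ring
  · -- smoothness of ψ'
    have := gneit_term_contDiffOn (α := α) ha (a * α * β) (α - 1) (β - 1)
    exact this.congr fun u _ => hψ' u
  · -- complete monotonicity
    -- main claim: for each n there is a good function agreeing with the iterated derivative
    have key : ∀ n : ℕ, ∃ f : ℝ → ℝ, GneitGood a α n f ∧
        ∀ u : ℝ, 0 < u → iteratedDerivWithin n ψ' (Ioi 0) u = f u := by
      intro n
      induction n with
      | zero =>
        exact ⟨_, hψ'good, fun u hu => by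
          rw [iteratedDerivWithin_zero]; exact hψ'eq u⟩
      | succ n ih =>
        obtain ⟨f, hf, heq⟩ := ih
        obtain ⟨g, hg, hdg⟩ := hf.deriv ha hα0 hα1
        refine ⟨g, hg, fun u hu => ?_⟩
        have hmem : u ∈ Ioi (0:ℝ) := hu
        rw [iteratedDerivWithin_succ,
          derivWithin_of_isOpen isOpen_Ioi hmem]
        have hev : iteratedDerivWithin n ψ' (Ioi 0) =ᶠ[nhds u] f := by
          filter_upwards [isOpen_Ioi.mem_nhds hmem] with v hv using heq v hv
        rw [hev.deriv_eq]
        exact (hdg u hu).deriv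
    intro n u hu
    obtain ⟨f, hf, heq⟩ := key n
    rw [heq u hu]
    exact hf.nonneg ha u hu
end
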